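/- arXiv:2201.03642 — 5 statements merged into one kernel-verified Lean document; each statement's English description precedes it below -/
import Mathlib

section
/- For any finite simple graph G on n vertices, χ(G) + χ(G^c) ≤ n + 1, where G^c is the complement of G. -/
/-!
Induction on the number of vertices. Remove a vertex `v` and colour `G - v` and its
complement with `a + b ≤ n` colours. If `deg_G v < a`, some colour is missing from the
neighbours of `v` and `v` takes it; symmetrically in `Gᶜ`. Otherwise
`a + b ≤ deg_G v + deg_Gᶜ v = n - 1`, and `v` gets a fresh colour on both sides.
-/

namespace SimpleGraph

variable {V α : Type*} {G : SimpleGraph V}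

lemma compl_induce (s : Set V) : (G.induce s)ᶜ = Gᶜ.induce s := by
  ext a b
  simp [Subtype.ext_iff]

def Coloring.extend [DecidableEq V] {v : V} (C : (G.induce {v}ᶜ).Coloring α) (c : α)
    (hc : ∀ w (hw : w ≠ v), G.Adj v w → C ⟨w, hw⟩ ≠ c) : G.Coloring α :=
  Coloring.mk (fun w => if hw : w = v then c else C ⟨w, hw⟩) <| by
    intro x y hxy
    split_ifs with hx hy hy
    · exact absurd (hx ▸ hy ▸ hxy) G.irrefl
    · exact (hc y hy (hx ▸ hxy)).symm
    · exact hc x hx (hy ▸ hxy.symm)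
    · exact C.valid hxy

lemma Colorable.of_induce_compl_singleton {v : V} {n : ℕ} (h : (G.induce {v}ᶜ).Colorable n) :
    G.Colorable (n + 1) := by
  classical
  obtain ⟨C⟩ := h
  exact ⟨(recolorOfEmbedding _ Fin.castSuccEmb C).extend (Fin.last n)
    fun w hw _ => (Fin.castSucc_lt_last _).ne⟩

lemma Colorable.of_induce_compl_singleton_of_degree_lt {v : V} [Fintype (G.neighborSet v)] {n : ℕ}
    (h : (G.induce {v}ᶜ).Colorable n) (hv : G.degree v < n) : G.Colorable n := by
  classical
  obtain ⟨C⟩ := h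
  suffices ∃ c, ∀ w (hw : w ≠ v), G.Adj v w → C ⟨w, hw⟩ ≠ c from
    let ⟨c, hc⟩ := this; ⟨C.extend c hc⟩
  by_contra! hall
  choose w hwv hadj hcol using hall
  have hinj : Function.Injective fun c => (⟨w c, hadj c⟩ : G.neighborSet v) := by
    intro c c' h
    have hw : w c = w c' := congrArg Subtype.val h
    rw [← hcol c, ← hcol c']
    exact congrArg C (Subtype.ext hw)
  have := Fintype.card_le_of_injective _ hinj
  rw [Fintype.card_fin, card_neighborSet_eq_degree] at this
  omega

lemma exists_colorable_colorable_compl_add_le [Fintype V] (G : SimpleGraph V) :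
    ∃ a b, G.Colorable a ∧ Gᶜ.Colorable b ∧ a + b ≤ Fintype.card V + 1 := by
  induction h : Fintype.card V generalizing V with
  | zero =>
    have := Fintype.card_eq_zero_iff.mp h
    exact ⟨0, 0, .of_isEmpty 0, .of_isEmpty 0, zero_le_one⟩
  | succ n ih =>
    classical
    obtain ⟨v⟩ : Nonempty V := Fintype.card_pos_iff.mp (by omega)
    obtain ⟨a, b, ha, hb, hab⟩ :=
      ih (G.induce {v}ᶜ) (by rw [Fintype.card_compl_set]; simp [h])
    rw [compl_induce] at hb
    have hdeg : G.degree v + Gᶜ.degree v = n := by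
      have := G.degree_lt_card_verts v
      rw [degree_compl]
      omega
    by_cases hda : G.degree v < a
    · exact ⟨a, b + 1, ha.of_induce_compl_singleton_of_degree_lt hda,
        hb.of_induce_compl_singleton, by omega⟩
    by_cases hdb : Gᶜ.degree v < b
    · exact ⟨a + 1, b, ha.of_induce_compl_singleton,
        hb.of_induce_compl_singleton_of_degree_lt hdb, by omega⟩
    exact ⟨a + 1, b + 1, ha.of_induce_compl_singleton, hb.of_induce_compl_singleton, by omega⟩

end SimpleGraph

theorem stmt1 {V : Type*} [Fintype V] (G : SimpleGraph V) :
    G.chromaticNumber + Gᶜ.chromaticNumber ≤ (Fintype.card V : ℕ∞) + 1 := by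
  obtain ⟨a, b, ha, hb, hab⟩ := SimpleGraph.exists_colorable_colorable_compl_add_le G
  calc G.chromaticNumber + Gᶜ.chromaticNumber ≤ a + b :=
        add_le_add ha.chromaticNumber_le hb.chromaticNumber_le
    _ ≤ Fintype.card V + 1 := by exact_mod_cast hab
end

section
/- Let G be a graph of order n and S ⊆ V(G) an independent set with |S| = k + 1. If χ(G) ≥ n − k, then the induced subgraph G[V(G) − S] is complete. -/
/-
Coloring the independent set `S` with one extra color shows `χ(G) ≤ χ(G[V - S]) + 1`, so the
hypothesis forces `χ(G[V - S]) ≥ n - k - 1 = |V - S|`. A graph whose chromatic number equals its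
order is complete.
-/

namespace SimpleGraph

variable {V : Type*} {G : SimpleGraph V} {s : Set V}

theorem Colorable.succ_of_isIndepSet {n : ℕ} (hs : G.IsIndepSet s)
    (h : (G.induce sᶜ).Colorable n) : G.Colorable (n + 1) := by
  classical
  obtain ⟨C⟩ := h
  let C' : G.Coloring (Option (Fin n)) :=
    Coloring.mk (fun v => if h : v ∈ s then none else some (C ⟨v, h⟩)) fun {a b} hab => by
      by_cases ha : a ∈ s <;> by_cases hb : b ∈ s <;> simp only [ha, hb, dite_true, dite_false,
        ne_eq, reduceCtorEq, not_false_eq_true, Option.some.injEq]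
      · exact fun _ => hs ha hb hab.ne hab
      · exact C.valid (induce_adj.mpr hab)
  simpa using C'.colorable

theorem chromaticNumber_le_induce_compl_add_one (hs : G.IsIndepSet s) :
    G.chromaticNumber ≤ (G.induce sᶜ).chromaticNumber + 1 := by
  rcases eq_or_ne (G.induce sᶜ).chromaticNumber ⊤ with h | h
  · simp [h]
  · have := (colorable_of_chromaticNumber_ne_top h).succ_of_isIndepSet hs |>.chromaticNumber_le
    rwa [Nat.cast_add, ENat.natCast_toNat h, Nat.cast_one] at this

end SimpleGraph

theorem stmt3_general {V : Type*} [Fintype V] (G : SimpleGraph V) (k : ℕ)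
    (S : Finset V) (hcard : S.card = k + 1)
    (hind : (S : Set V).Pairwise fun a b => ¬ G.Adj a b)
    (hchi : ((Fintype.card V - k : ℕ) : ℕ∞) ≤ G.chromaticNumber) :
    ∀ x y : V, x ∉ S → y ∉ S → x ≠ y → G.Adj x y := by
  classical
  intro x y hx hy hxy
  have hcompl : Fintype.card ((S : Set V)ᶜ : Set V) + 1 = Fintype.card V - k := by
    have := S.card_le_univ
    rw [Fintype.card_compl_set]
    simp only [Finset.coe_sort_coe, Fintype.card_coe]
    omega
  have hχ : (G.induce (S : Set V)ᶜ).chromaticNumber = Fintype.card ((S : Set V)ᶜ : Set V) := by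
    refine G.induce _ |>.chromaticNumber_le_card.antisymm ?_
    rw [← ENat.add_le_add_iff_right ENat.one_ne_top]
    exact_mod_cast hcompl ▸ hchi.trans (SimpleGraph.chromaticNumber_le_induce_compl_add_one hind)
  have htop := SimpleGraph.chromaticNumber_eq_card_iff.mp hχ
  have : (G.induce (S : Set V)ᶜ).Adj ⟨x, hx⟩ ⟨y, hy⟩ := by simpa [htop] using hxy
  exact SimpleGraph.induce_adj.mp this

theorem stmt3 {V : Type*} [Fintype V] [DecidableEq V] (G : SimpleGraph V) (k : ℕ)
    (S : Finset V) (hcard : S.card = k + 1)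
    (hind : (S : Set V).Pairwise fun a b => ¬ G.Adj a b)
    (hchi : ((Fintype.card V - k : ℕ) : ℕ∞) ≤ G.chromaticNumber) :
    ∀ x y : V, x ∉ S → y ∉ S → x ≠ y → G.Adj x y :=
  stmt3_general G k S hcard hind hchi
end

section
/- Let C be a longest cycle in a graph G with a fixed orientation, let x₀ be a vertex not on C, and let u₁, ..., u_s be the endpoints on C of s internally disjoint paths from x₀ to C that intersect C only in their endpoints. Then the set {x₀, u₁⁺, u₂⁺, ..., u_s⁺} is an independent set in G, where uᵢ⁺ denotes the successor of uᵢ along the orientation of C. -/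
/-!
Both non-adjacencies come from exhibiting a cycle longer than `C`. If `x₀` were adjacent to
`u⁺`, then `u⁺ → u` around `C`, back along `P` to `x₀`, and the edge `x₀u⁺` would form a cycle
of length `|C| + |P|`. If `uᵢ⁺` were adjacent to `uⱼ⁺`, then `uᵢ⁺ → uⱼ` along `C`,
`uⱼ → x₀ → uᵢ` along `Pⱼ` and `Pᵢ`, `uᵢ → uⱼ⁺` backwards along `C` and the edge `uⱼ⁺uᵢ⁺`
would form a cycle of length `|C| - 1 + |Pᵢ| + |Pⱼ|`.
-/

theorem List.next_getLast_append {α : Type*} [DecidableEq α] {l₁ l₂ : List α} (h₁ : l₁ ≠ [])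
    (h₂ : l₂ ≠ []) (hnd : (l₁ ++ l₂).Nodup) :
    (l₁ ++ l₂).next (l₁.getLast h₁) (mem_append_left _ (getLast_mem h₁)) = l₂.head h₂ := by
  rw [List.isRotated_next_eq List.isRotated_append hnd]
  simp only [← List.getLast_append_right (l := l₂) h₁]
  rw [List.next_getLast_eq_head _ _ (List.isRotated_append.nodup_iff.mp hnd)]
  exact List.head_append_of_ne_nil h₂

namespace SimpleGraph.Walk

variable {V : Type*} {G : SimpleGraph V}

theorem IsPath.append {u v w : V} {p : G.Walk u v} {q : G.Walk v w} (hp : p.IsPath)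
    (hq : q.IsPath) (h : ∀ x ∈ p.support, x ∈ q.support → x = v) : (p.append q).IsPath := by
  refine IsPath.mk' ?_
  rw [support_append, List.nodup_append]
  refine ⟨hp.support_nodup, hq.support_nodup.sublist q.support.tail_sublist, ?_⟩
  rintro x hxp y hyq rfl
  obtain rfl := h x hxp (List.mem_of_mem_tail hyq)
  exact (List.nodup_cons.mp (q.cons_tail_support ▸ hq.support_nodup)).1 hyq

theorem cons_isCycle_of_isPath {u v : V} {p : G.Walk v u} (h : G.Adj u v) (hp : p.IsPath)
    (hlen : 2 ≤ p.length) : (cons h p).IsCycle :=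
  isCycle_iff_isPath_tail_and_le_length.mpr ⟨by simpa using hp, by simpa using hlen⟩

theorem IsPath.append_reverse {l : List V} {c x a : V} {q : G.Walk c a} {P : G.Walk x a}
    (hq : q.IsPath) (hql : ∀ y ∈ q.support, y ∈ l) (hP : P.IsPath)
    (hPl : ∀ y ∈ P.support, y ∈ l → y = a) : (q.append P.reverse).IsPath :=
  hq.append hP.reverse fun y hyq hyP => hPl y (by simpa using hyP) (hql y hyq)

variable [DecidableEq V] {v : V} {C : G.Walk v v}

theorem IsCycle.exists_walk_from_next (hC : C.IsCycle) {a : V} (ha : a ∈ C.support.tail) :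
    ∃ q : G.Walk (C.support.tail.next a ha) a,
      q.support ~r C.support.tail ∧ q.length + 1 = C.length := by
  have ha' := List.mem_of_mem_tail ha
  obtain ⟨y, h, q, hrot⟩ := not_nil_iff.mp (hC.rotate ha').not_nil
  have hq : q.support ~r C.support.tail := by
    simpa [hrot] using C.support_rotate a ha'
  have hnext : C.support.tail.next a ha = y := by
    rw [List.isRotated_next_eq hq.symm hC.support_nodup ha]
    simpa using List.next_getLast_eq_head q.support q.support_ne_nil
      (hq.nodup_iff.mpr hC.support_nodup)
  subst hnext
  exact ⟨q, hq, by simpa [hrot] using C.length_rotate a ha'⟩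

theorem IsCycle.exists_walks_between_nexts (hC : C.IsCycle) {a b : V} (ha : a ∈ C.support.tail)
    (hb : b ∈ C.support.tail) (hab : a ≠ b) :
    ∃ (q : G.Walk (C.support.tail.next a ha) b) (r : G.Walk (C.support.tail.next b hb) a),
      (q.support ++ r.support) ~r C.support.tail ∧ q.length + r.length + 2 = C.length := by
  obtain ⟨p, hp, hlen⟩ := hC.exists_walk_from_next ha
  have hbp : b ∈ p.support := hp.mem_iff.mpr hb
  obtain ⟨z, h, r, hdrop⟩ := not_nil_iff.mp (not_nil_of_ne (p := p.dropUntil b hbp) hab.symm)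
  set q := p.takeUntil b hbp
  have hsplit : p = q.append (cons h r) := by rw [← hdrop]; exact (p.take_spec hbp).symm
  have hsupp : p.support = q.support ++ r.support := by rw [hsplit]; simp [support_append]
  have hnd : (q.support ++ r.support).Nodup := hsupp ▸ hp.nodup_iff.mpr hC.support_nodup
  have hnext : C.support.tail.next b hb = z := by
    rw [List.isRotated_next_eq hp.symm hC.support_nodup hb]
    simpa [hsupp] using List.next_getLast_append q.support_ne_nil r.support_ne_nil hnd
  subst hnext
  refine ⟨q, r, hsupp ▸ hp, ?_⟩
  rw [← hlen, hsplit, length_append, length_cons]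
  omega

theorem IsCycle.exists_longer_of_adj_next (hC : C.IsCycle) {x a : V} (hx : x ∉ C.support)
    (ha : a ∈ C.support.tail) (P : G.Walk x a) (hP : P.IsPath)
    (hPC : ∀ y ∈ P.support, y ∈ C.support → y = a) (hadj : G.Adj x (C.support.tail.next a ha)) :
    ∃ (w : V) (D : G.Walk w w), D.IsCycle ∧ C.length < D.length := by
  obtain ⟨q, hq, hlen⟩ := hC.exists_walk_from_next ha
  have hpath : (q.append P.reverse).IsPath :=
    (IsPath.mk' (hq.nodup_iff.mpr hC.support_nodup)).append_reverse
      (fun y hy => List.mem_of_mem_tail (hq.mem_iff.mp hy)) hP hPC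
  have hP_pos : 0 < P.length :=
    not_nil_iff_lt_length.mp (not_nil_of_ne fun h => hx (h ▸ List.mem_of_mem_tail ha))
  have hC_len := hC.three_le_length
  refine ⟨x, cons hadj (q.append P.reverse), cons_isCycle_of_isPath hadj hpath ?_, ?_⟩ <;>
    simp only [length_cons, length_append, length_reverse] <;> omega

theorem IsCycle.exists_longer_of_adj_next_next (hC : C.IsCycle) {x a b : V} (hx : x ∉ C.support)
    (ha : a ∈ C.support.tail) (hb : b ∈ C.support.tail) (hab : a ≠ b)
    (Pa : G.Walk x a) (hPa : Pa.IsPath) (Pb : G.Walk x b) (hPb : Pb.IsPath)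
    (hPab : ∀ y ∈ Pa.support, y ∈ Pb.support → y = x)
    (hPaC : ∀ y ∈ Pa.support, y ∈ C.support → y = a)
    (hPbC : ∀ y ∈ Pb.support, y ∈ C.support → y = b)
    (hadj : G.Adj (C.support.tail.next a ha) (C.support.tail.next b hb)) :
    ∃ (w : V) (D : G.Walk w w), D.IsCycle ∧ C.length < D.length := by
  obtain ⟨q, r, hqr, hlen⟩ := hC.exists_walks_between_nexts ha hb hab
  have hnd := hqr.nodup_iff.mpr hC.support_nodup
  have hqr_disj := List.disjoint_of_nodup_append hnd
  have hqC : ∀ y ∈ q.support, y ∈ C.support := fun y hy =>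
    List.mem_of_mem_tail (hqr.mem_iff.mp (List.mem_append_left _ hy))
  have hrC : ∀ y ∈ r.support, y ∈ C.support := fun y hy =>
    List.mem_of_mem_tail (hqr.mem_iff.mp (List.mem_append_right _ hy))
  have hL : (q.append Pb.reverse).IsPath :=
    (IsPath.mk' (List.nodup_append.mp hnd).1).append_reverse hqC hPb hPbC
  have hR : (r.append Pa.reverse).IsPath :=
    (IsPath.mk' (List.nodup_append.mp hnd).2.1).append_reverse hrC hPa hPaC
  have hpath : ((q.append Pb.reverse).append (r.append Pa.reverse).reverse).IsPath :=
    hL.append hR.reverse fun y hyL hyR => by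
      simp only [support_reverse, List.mem_reverse, mem_support_append_iff] at hyL hyR
      rcases hyL with hyq | hyPb <;> rcases hyR with hyr | hyPa
      · exact absurd hyr (hqr_disj hyq)
      · obtain rfl := hPaC y hyPa (hqC y hyq)
        exact absurd r.end_mem_support (hqr_disj hyq)
      · obtain rfl := hPbC y hyPb (hrC y hyr)
        exact absurd hyr (hqr_disj q.end_mem_support)
      · exact hPab y hyPa hyPb
  have hPa_pos : 0 < Pa.length :=
    not_nil_iff_lt_length.mp (not_nil_of_ne fun h => hx (h ▸ List.mem_of_mem_tail ha))
  have hPb_pos : 0 < Pb.length :=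
    not_nil_iff_lt_length.mp (not_nil_of_ne fun h => hx (h ▸ List.mem_of_mem_tail hb))
  refine ⟨_, cons hadj.symm _, cons_isCycle_of_isPath hadj.symm hpath ?_, ?_⟩ <;>
    simp only [length_cons, length_append, length_reverse] <;> omega

end SimpleGraph.Walk

theorem stmt10_general {V : Type*} [DecidableEq V] (G : SimpleGraph V)
    (v : V) (C : G.Walk v v) (hC : C.IsCycle)
    (hlong : ∀ (w : V) (D : G.Walk w w), D.IsCycle → D.length ≤ C.length)
    (x0 : V) (hx0 : x0 ∉ C.support)
    (s : ℕ) (u : Fin s → V) (hu_inj : Function.Injective u)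
    (hu : ∀ i, u i ∈ C.support.tail)
    (P : (i : Fin s) → G.Walk x0 (u i)) (hP : ∀ i, (P i).IsPath)
    (hdisj : ∀ i j, i ≠ j → ∀ y, y ∈ (P i).support → y ∈ (P j).support → y = x0)
    (hmeet : ∀ i, ∀ y ∈ (P i).support, y ∈ C.support → y = u i) :
    ({x0} ∪ Set.range fun i => C.support.tail.next (u i) (hu i) : Set V).Pairwise
      fun a b => ¬ G.Adj a b := by
  have hmax : ¬ ∃ (w : V) (D : G.Walk w w), D.IsCycle ∧ C.length < D.length :=
    fun ⟨w, D, hD, hlt⟩ => (hlong w D hD).not_gt hlt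
  rintro a (rfl | ⟨i, rfl⟩) b (rfl | ⟨j, rfl⟩) hne hadj
  · exact hne rfl
  · exact hmax (hC.exists_longer_of_adj_next hx0 (hu j) (P j) (hP j) (hmeet j) hadj)
  · exact hmax (hC.exists_longer_of_adj_next hx0 (hu i) (P i) (hP i) (hmeet i) hadj.symm)
  · have hij : i ≠ j := fun h => hne (h ▸ rfl)
    exact hmax (hC.exists_longer_of_adj_next_next hx0 (hu i) (hu j) (hu_inj.ne hij)
      (P i) (hP i) (P j) (hP j) (hdisj i j hij) (hmeet i) (hmeet j) hadj)

theorem stmt10 {V : Type*} [Fintype V] [DecidableEq V] (G : SimpleGraph V)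
    (v : V) (C : G.Walk v v) (hC : C.IsCycle)
    (hlong : ∀ (w : V) (D : G.Walk w w), D.IsCycle → D.length ≤ C.length)
    (x0 : V) (hx0 : x0 ∉ C.support)
    (s : ℕ) (u : Fin s → V) (hu_inj : Function.Injective u)
    (hu : ∀ i, u i ∈ C.support.tail)
    (P : (i : Fin s) → G.Walk x0 (u i)) (hP : ∀ i, (P i).IsPath)
    (hdisj : ∀ i j, i ≠ j → ∀ y, y ∈ (P i).support → y ∈ (P j).support → y = x0)
    (hmeet : ∀ i, ∀ y ∈ (P i).support, y ∈ C.support → y = u i) :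
    ({x0} ∪ Set.range fun i => C.support.tail.next (u i) (hu i) : Set V).Pairwise
      fun a b => ¬ G.Adj a b :=
  stmt10_general G v C hC hlong x0 hx0 s u hu_inj hu P hP hdisj hmeet
end

section
/- For every k ≥ 2 and n ≥ 2k + 1, the graph G = K_k ∨ (K_k^c ∪ K_{n−2k}) is k-connected but not (k+1)-connected. -/
/-- Independence number: the largest size of a set of pairwise nonadjacent vertices. -/
noncomputable def SimpleGraph.indepNum' {V : Type*} (G : SimpleGraph V) : ℕ :=
  sSup {n | ∃ s : Finset V, s.card = n ∧ (s : Set V).Pairwise fun a b => ¬ G.Adj a b}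

/-- `k`-connectedness: more than `k` vertices and deleting any fewer than `k`
vertices leaves a connected graph. -/
def SimpleGraph.IsKConnected {V : Type*} [Fintype V] (G : SimpleGraph V) (k : ℕ) : Prop :=
  k < Fintype.card V ∧
    ∀ S : Finset V, S.card < k → (G.induce ((↑S : Set V)ᶜ)).Connected

/-- The graph `K_k ∨ (K_k^c ∪ K_m)`. -/
def specialGraph (k m : ℕ) : SimpleGraph (Fin k ⊕ (Fin k ⊕ Fin m)) where
  Adj x y := x ≠ y ∧ (x.isLeft = true ∨ y.isLeft = true ∨
      ((∃ a, x = Sum.inr (Sum.inr a)) ∧ (∃ b, y = Sum.inr (Sum.inr b))))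
  symm := ⟨by rintro x y ⟨h1, h2⟩; exact ⟨h1.symm, by tauto⟩⟩
  loopless := ⟨by rintro x ⟨h, -⟩; exact h rfl⟩

/-- The complete split graph `K_k ∨ K_{k+1}^c`. -/
def splitGraph (k : ℕ) : SimpleGraph (Fin k ⊕ Fin (k + 1)) where
  Adj x y := x ≠ y ∧ (x.isLeft = true ∨ y.isLeft = true)
  symm := ⟨by rintro x y ⟨h1, h2⟩; exact ⟨h1.symm, by tauto⟩⟩
  loopless := ⟨by rintro x ⟨h, -⟩; exact h rfl⟩

/-!
Every vertex of the clique `K_k` is adjacent to all other vertices, so deleting fewer than `k`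
vertices leaves one of them, and the rest of the graph stays connected through it. Deleting the
whole clique isolates each of the (at least two) vertices of `K_k^c`.
-/

namespace SimpleGraph

variable {V : Type*} {G : SimpleGraph V}

theorem IsUniversal.induce {s : Set V} {v : V} (hv : G.IsUniversal v) (hvs : v ∈ s) :
    (G.induce s).IsUniversal ⟨v, hvs⟩ :=
  fun _ hw => hv (Subtype.coe_ne_coe.mpr hw)

theorem IsIsolated.not_connected {u v : V} (hu : G.IsIsolated u) (huv : u ≠ v) :
    ¬G.Connected :=
  fun h => not_reachable_of_neighborSet_left_eq_empty huv hu.neighborSet_eq_empty (h u v)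

end SimpleGraph

theorem Finset.exists_inl_notMem_of_card_lt {α β : Type*} [Fintype α] (S : Finset (α ⊕ β))
    (hS : S.card < Fintype.card α) : ∃ a, .inl a ∉ S := by
  obtain ⟨x, hx, hxS⟩ := Finset.exists_mem_notMem_of_card_lt_card
    (s := S) (t := Finset.univ.map .inl) (by simpa using hS)
  obtain ⟨a, -, rfl⟩ := Finset.mem_map.mp hx
  exact ⟨a, hxS⟩

namespace specialGraph

open SimpleGraph

variable {k m : ℕ}

theorem isUniversal_inl (a : Fin k) : (specialGraph k m).IsUniversal (.inl a) :=
  fun _ hw => ⟨hw, .inl rfl⟩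

theorem isLeft_of_adj_inr_inl {a : Fin k} {w : Fin k ⊕ (Fin k ⊕ Fin m)}
    (h : (specialGraph k m).Adj (.inr (.inl a)) w) : w.isLeft := by
  obtain ⟨-, hw | hw | ⟨⟨b, hb⟩, -⟩⟩ := h
  · simp at hw
  · exact hw
  · simp at hb

theorem isKConnected (hk : 0 < k) : (specialGraph k m).IsKConnected k := by
  refine ⟨by simp only [Fintype.card_sum, Fintype.card_fin]; omega, fun S hS => ?_⟩
  obtain ⟨a, ha⟩ := S.exists_inl_notMem_of_card_lt (by simpa using hS)
  exact .of_isUniversal ((isUniversal_inl a).induce (by simpa using ha))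

theorem not_isKConnected_succ (hk : 2 ≤ k) : ¬(specialGraph k m).IsKConnected (k + 1) := by
  rintro ⟨-, hconn⟩
  set S : Finset (Fin k ⊕ (Fin k ⊕ Fin m)) := Finset.univ.map .inl
  have hS : S.card < k + 1 := by simp [S]
  have mem_compl (b : Fin k) : (.inr (.inl b) : Fin k ⊕ (Fin k ⊕ Fin m)) ∈ (↑S : Set _)ᶜ := by
    simp [S]
  have isolated : ((specialGraph k m).induce (↑S)ᶜ).IsIsolated ⟨_, mem_compl ⟨0, by omega⟩⟩ := by
    rintro ⟨w, hw⟩ hadj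
    obtain ⟨a, rfl⟩ := Sum.isLeft_iff.mp (isLeft_of_adj_inr_inl hadj)
    simp [S] at hw
  exact isolated.not_connected (v := ⟨.inr (.inl ⟨1, hk⟩), mem_compl _⟩) (by simp) (hconn S hS)

end specialGraph

theorem stmt13_general (k n : ℕ) (hk : 2 ≤ k) :
    (specialGraph k (n - 2 * k)).IsKConnected k ∧
      ¬ (specialGraph k (n - 2 * k)).IsKConnected (k + 1) :=
  ⟨specialGraph.isKConnected (by omega), specialGraph.not_isKConnected_succ hk⟩

theorem stmt13 (k n : ℕ) (hk : 2 ≤ k) (hn : 2 * k + 1 ≤ n) :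
    (specialGraph k (n - 2 * k)).IsKConnected k ∧
      ¬ (specialGraph k (n - 2 * k)).IsKConnected (k + 1) :=
  stmt13_general k n hk
end

section
/- Let G be a k-connected graph (k ≥ 2) of order n with χ(G) ≥ n − k that is not Hamiltonian. Then n ≥ 2k + 1, χ(G) = n − k, and α(G) = k + 1. -/
/-!
Chvátal–Erdős argument. Let `c` be a longest cycle, `v` a vertex off it (there is one, as `G`
is not Hamiltonian), `H` the set of vertices reachable from `v` avoiding `c`, and `U` the
vertices of `c` with a neighbour in `H`. Every edge leaving `H` ends in `U`, and some vertex of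
`c` lies outside `U`, so `U` separates and `k ≤ |U|`. If a successor on `c` of a vertex of `U`
were adjacent to `v`, or two such successors were adjacent to each other, a path through `H`
could be spliced into `c` to give a longer cycle. Hence `v` with the successors of `U` is an
independent set of size `k + 1`.
Colouring an independent set `s` with one colour and all other vertices with distinct colours
shows `χ ≤ n - |s| + 1`, which together with `n - k ≤ χ` forces `α = k + 1` and `χ = n - k`;
the `k + 1` independent vertices and the `≥ k` neighbours of one of them give `2k + 1 ≤ n`.
-/

namespace List

variable {α : Type*} [DecidableEq α] {l : List α}

theorem exists_isRotated_head?_next {x : α} (hl : l.Nodup) (hx : x ∈ l) :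
    ∃ r, l ~r r ∧ r.head? = some (l.next x hx) ∧ r.getLast? = some x := by
  obtain ⟨i, hi, rfl⟩ := getElem_of_mem hx
  have hpos : 0 < l.length := by omega
  refine ⟨l.rotate (i + 1), ⟨i + 1, rfl⟩, ?_, ?_⟩
  · rw [next_getElem l hl, head?_eq_getElem?, getElem?_rotate hpos, zero_add,
      getElem?_eq_getElem (Nat.mod_lt _ hpos)]
  · rw [getLast?_eq_getElem?, length_rotate, getElem?_rotate (by omega),
      show l.length - 1 + (i + 1) = i + l.length by omega, Nat.add_mod_right,
      Nat.mod_eq_of_lt hi, getElem?_eq_getElem hi]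

theorem exists_isRotated_append_head?_next {u u' : α} (hl : l.Nodup) (hu : u ∈ l)
    (hu' : u' ∈ l) (hne : u ≠ u') :
    ∃ B A, l ~r B ++ A ∧ B.head? = some (l.next u hu) ∧ B.getLast? = some u' ∧
      A.head? = some (l.next u' hu') ∧ A.getLast? = some u := by
  obtain ⟨r, hlr, hhead, hlast⟩ := exists_isRotated_head?_next hl hu
  have hr : r.Nodup := hlr.nodup_iff.1 hl
  obtain ⟨j, hj, rfl⟩ := getElem_of_mem (hlr.perm.subset hu')
  have hj1 : j + 1 < r.length := by
    by_contra! h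
    rw [getLast?_eq_getElem?, show r.length - 1 = j by omega, getElem?_eq_getElem hj] at hlast
    exact hne (Option.some_injective _ hlast).symm
  have hnext : l.next r[j] hu' = r[j + 1] := by
    simp only [isRotated_next_eq hlr hl, next_getElem r hr, Nat.mod_eq_of_lt hj1]
  refine ⟨r.take (j + 1), r.drop (j + 1), by rwa [take_append_drop], ?_, ?_, ?_, ?_⟩
  · rw [head?_take, if_neg (by omega), hhead]
  · rw [getLast?_take, if_neg (by omega), Nat.add_sub_cancel, getElem?_eq_getElem hj,
      Option.some_or]
  · rw [head?_drop, getElem?_eq_getElem hj1, hnext]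
  · rw [getLast?_drop, if_neg (by omega), hlast]

end List

namespace SimpleGraph

variable {V : Type*} {G : SimpleGraph V}

structure IsCycleList (G : SimpleGraph V) (l : List V) : Prop where
  three_le_length : 3 ≤ l.length
  nodup : l.Nodup
  isChain : l.IsChain G.Adj
  adj_getLast_head : ∀ a ∈ l.getLast?, ∀ b ∈ l.head?, G.Adj a b

theorem isCycleList_append_iff {l₁ l₂ : List V} (h₁ : l₁ ≠ []) (h₂ : l₂ ≠ []) :
    IsCycleList G (l₁ ++ l₂) ↔ 3 ≤ l₁.length + l₂.length ∧ (l₁ ++ l₂).Nodup ∧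
      l₁.IsChain G.Adj ∧ l₂.IsChain G.Adj ∧
      (∀ a ∈ l₁.getLast?, ∀ b ∈ l₂.head?, G.Adj a b) ∧
      (∀ a ∈ l₂.getLast?, ∀ b ∈ l₁.head?, G.Adj a b) := by
  rw [← List.length_append]
  constructor
  · rintro ⟨hlen, hnd, hch, hcl⟩
    rw [List.isChain_append] at hch
    rw [List.getLast?_append_of_ne_nil _ h₂, List.head?_append_of_ne_nil _ h₁] at hcl
    exact ⟨hlen, hnd, hch.1, hch.2.1, hch.2.2, hcl⟩
  · rintro ⟨hlen, hnd, hch₁, hch₂, h₁₂, h₂₁⟩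
    refine ⟨hlen, hnd, List.isChain_append.2 ⟨hch₁, hch₂, h₁₂⟩, ?_⟩
    rwa [List.getLast?_append_of_ne_nil _ h₂, List.head?_append_of_ne_nil _ h₁]

theorem IsCycleList.append_comm {l₁ l₂ : List V} (h : IsCycleList G (l₁ ++ l₂)) :
    IsCycleList G (l₂ ++ l₁) := by
  rcases eq_or_ne l₁ [] with rfl | h₁
  · simpa using h
  rcases eq_or_ne l₂ [] with rfl | h₂
  · simpa using h
  obtain ⟨hlen, hnd, hch₁, hch₂, h₁₂, h₂₁⟩ := (isCycleList_append_iff h₁ h₂).1 h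
  exact (isCycleList_append_iff h₂ h₁).2
    ⟨by omega, List.nodup_append_comm.1 hnd, hch₂, hch₁, h₂₁, h₁₂⟩

theorem IsCycleList.rotate {l : List V} (h : IsCycleList G l) (n : ℕ) :
    IsCycleList G (l.rotate n) := by
  rw [List.rotate_eq_drop_append_take_mod]
  exact (List.take_append_drop (n % l.length) l ▸ h).append_comm

theorem IsCycleList.isRotated {l l' : List V} (h : IsCycleList G l) (hl : l ~r l') :
    IsCycleList G l' := by
  obtain ⟨n, rfl⟩ := hl
  exact h.rotate n

theorem Walk.head?_support {u v : V} (p : G.Walk u v) : p.support.head? = some u := by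
  rw [← p.cons_tail_support]; rfl

theorem Walk.getLast?_support {u v : V} (p : G.Walk u v) : p.support.getLast? = some v := by
  rw [List.getLast?_eq_some_getLast p.support_ne_nil, Walk.getLast_support]

theorem isCycleList_support_append {l : List V} {a b h h' : V} (hl : 2 ≤ l.length)
    (hnd : l.Nodup) (hch : l.IsChain G.Adj) (ha : l.head? = some a) (hb : l.getLast? = some b)
    (q : G.Walk h h') (hq : q.IsPath) (hdisj : ∀ x ∈ q.support, x ∉ l)
    (hh'a : G.Adj h' a) (hbh : G.Adj b h) : IsCycleList G (q.support ++ l) := by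
  have hl₀ : l ≠ [] := List.ne_nil_of_length_pos (by omega)
  refine (isCycleList_append_iff q.support_ne_nil hl₀).2
    ⟨by have := q.length_support; omega, List.nodup_append.2 ⟨hq.support_nodup, hnd, ?_⟩,
      q.isChain_adj_support, hch, ?_, ?_⟩
  · rintro x hx y hy rfl
    exact hdisj x hx hy
  · simpa [q.getLast?_support, ha] using hh'a
  · simpa [q.head?_support, hb] using hbh

theorem Walk.IsCycle.isCycleList_support_tail {v : V} {c : G.Walk v v} (hc : c.IsCycle) :
    IsCycleList G c.support.tail := by
  cases c with
  | nil => exact absurd hc Walk.not_isCycle_nil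
  | cons h p =>
    refine ⟨?_, by simpa using hc.support_nodup, by simpa using p.isChain_adj_support, ?_⟩
    · have := hc.three_le_length
      simp_all
    · simpa [p.getLast?_support, p.head?_support] using h

theorem IsCycleList.isHamiltonian [Fintype V] [DecidableEq V] {l : List V} (hl : IsCycleList G l)
    (hall : ∀ x, x ∈ l) : G.IsHamiltonian := by
  have hl₀ : l ≠ [] := List.ne_nil_of_length_pos (by have := hl.three_le_length; omega)
  obtain ⟨a, t, rfl⟩ := List.exists_cons_of_ne_nil hl₀
  have hch : (a :: (t ++ [a])).IsChain G.Adj := by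
    rw [← List.cons_append]
    refine List.isChain_append.2 ⟨hl.isChain, List.isChain_singleton a, ?_⟩
    simpa using hl.adj_getLast_head
  obtain ⟨w, hsw, hlw⟩ :
      ∃ w : G.Walk a a, w.support = a :: (t ++ [a]) ∧ w.length = t.length + 1 :=
    ⟨(Walk.ofSupport _ (List.cons_ne_nil _ _) hch).copy (List.head_cons ..) (by simp),
      by rw [Walk.support_copy, Walk.support_ofSupport],
      by rw [Walk.length_copy, Walk.length_ofSupport]; simp⟩
  intro _
  refine ⟨a, w, Walk.isHamiltonianCycle_iff_isCycle_and_length_eq.2 ⟨?_, ?_⟩⟩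
  · have hlen := hl.three_le_length
    rw [Walk.isCycle_iff_isPath_tail_and_le_length, Walk.isPath_def,
      Walk.support_tail_of_not_nil _ (by rw [← Walk.length_eq_zero_iff]; omega), hsw]
    exact ⟨(List.perm_append_singleton a t).nodup_iff.2 hl.nodup, by simp at hlen; omega⟩
  · have := List.toFinset_card_of_nodup hl.nodup
    rw [Finset.eq_univ_of_forall (fun x => List.mem_toFinset.2 (hall x)), Finset.card_univ] at this
    simp [hlw, this]

structure IsLongestCycleList (G : SimpleGraph V) (c : List V) : Prop extends IsCycleList G c where
  length_le : ∀ l, IsCycleList G l → l.length ≤ c.length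

theorem exists_isLongestCycleList [Fintype V] (h : ¬G.IsAcyclic) :
    ∃ c, G.IsLongestCycleList c := by
  obtain ⟨v, w, hw⟩ : ∃ v, ∃ w : G.Walk v v, w.IsCycle := by
    simpa [IsAcyclic] using h
  have hne : {n | ∃ l, IsCycleList G l ∧ l.length = n}.Nonempty :=
    ⟨_, _, hw.isCycleList_support_tail, rfl⟩
  have hbdd : BddAbove {n | ∃ l, IsCycleList G l ∧ l.length = n} :=
    ⟨Fintype.card V, by rintro _ ⟨l, hl, rfl⟩; exact hl.nodup.length_le_card⟩
  obtain ⟨c, hc, hlen⟩ := Nat.sSup_mem hne hbdd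
  exact ⟨c, hc, fun l hl => hlen ▸ le_csSup hbdd ⟨l, hl, rfl⟩⟩

section LongestCycle

variable [DecidableEq V] {c : List V}

theorem IsLongestCycleList.not_adj_next_of_walk (hc : G.IsLongestCycleList c) {u h h' : V}
    (hu : u ∈ c) (q : G.Walk h h') (hq : ∀ x ∈ q.support, x ∉ c) (huh : G.Adj u h) :
    ¬G.Adj h' (c.next u hu) := by
  intro hadj
  -- `c` read from `next u` round to `u`, followed by `q`, would be a longer cycle.
  obtain ⟨r, hcr, hhead, hlast⟩ := c.exists_isRotated_head?_next hc.nodup hu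
  have hr := hc.toIsCycleList.isRotated hcr
  have hlen := hcr.perm.length_eq
  have := hc.length_le _ <| isCycleList_support_append (by have := hr.three_le_length; omega)
    hr.nodup hr.isChain hhead hlast q.bypass q.bypass_isPath
    (fun x hx hxr => hq x (q.support_bypass_subset_support hx) (hcr.perm.mem_iff.2 hxr))
    hadj huh
  simp only [List.length_append, Walk.length_support] at this
  omega

theorem IsLongestCycleList.not_adj_next_next_of_walk (hc : G.IsLongestCycleList c)
    {u u' h h' : V} (hu : u ∈ c) (hu' : u' ∈ c) (hne : u ≠ u') (q : G.Walk h h')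
    (hq : ∀ x ∈ q.support, x ∉ c) (huh : G.Adj u h) (hu'h' : G.Adj u' h') :
    ¬G.Adj (c.next u hu) (c.next u' hu') := by
  intro hadj
  -- `q`, then `c` backwards from `u'` to `next u`, then forwards from `next u'` to `u`,
  -- would be a longer cycle.
  obtain ⟨B, A, hcBA, hBh, hBl, hAh, hAl⟩ :=
    c.exists_isRotated_append_head?_next hc.nodup hu hu' hne
  have hB : B ≠ [] := by rintro rfl; simp at hBh
  have hA : A ≠ [] := by rintro rfl; simp at hAh
  obtain ⟨hlen, -, hchB, hchA, -, -⟩ :=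
    (isCycleList_append_iff hB hA).1 (hc.toIsCycleList.isRotated hcBA)
  have hperm : (B.reverse ++ A).Perm c := (B.reverse_perm.append_right A).trans hcBA.perm.symm
  have hch : (B.reverse ++ A).IsChain G.Adj := by
    refine List.isChain_append.2
      ⟨List.isChain_reverse.2 (hchB.imp fun _ _ h => h.symm), hchA, ?_⟩
    simpa [List.getLast?_reverse, hBh, hAh] using hadj
  have := hc.length_le _ <| isCycleList_support_append (by simp; omega)
    (hperm.nodup_iff.2 hc.nodup) hch
    (by rw [List.head?_append_of_ne_nil _ (by simpa), List.head?_reverse, hBl])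
    (by rw [List.getLast?_append_of_ne_nil _ hA, hAl]) q.bypass q.bypass_isPath
    (fun x hx hxr => hq x (q.support_bypass_subset_support hx) (hperm.mem_iff.1 hxr))
    hu'h'.symm huh
  simp only [List.length_append, List.length_reverse, Walk.length_support] at this
  have := hcBA.perm.length_eq
  simp only [List.length_append] at this
  omega

theorem IsLongestCycleList.exists_mem_forall_not_adj (hc : G.IsLongestCycleList c) {H : Set V}
    (hH : ∀ h ∈ H, ∀ h' ∈ H, ∃ q : G.Walk h h', ∀ x ∈ q.support, x ∉ c) :
    ∃ w ∈ c, ∀ h ∈ H, ¬G.Adj w h := by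
  obtain ⟨u, hu⟩ :=
    List.exists_mem_of_length_pos (l := c) (by have := hc.three_le_length; omega)
  by_cases huH : ∀ h ∈ H, ¬G.Adj u h
  · exact ⟨u, hu, huH⟩
  obtain ⟨h, hh, huh⟩ : ∃ h ∈ H, G.Adj u h := by simpa using huH
  refine ⟨c.next u hu, c.next_mem u hu, fun h' hh' hadj => ?_⟩
  obtain ⟨q, hq⟩ := hH h hh h' hh'
  exact hc.not_adj_next_of_walk hu q hq huh hadj.symm

theorem IsLongestCycleList.exists_isIndepSet_card_add_one_le (hc : G.IsLongestCycleList c)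
    {H : Set V} {v : V} (hv : v ∈ H) (hvc : v ∉ c)
    (hH : ∀ h ∈ H, ∀ h' ∈ H, ∃ q : G.Walk h h', ∀ x ∈ q.support, x ∉ c)
    {U : Finset V} (hU : ∀ u ∈ U, u ∈ c ∧ ∃ h ∈ H, G.Adj u h) :
    ∃ s : Finset V, U.card + 1 ≤ s.card ∧ G.IsIndepSet s := by
  let σ : V → V := fun x => if hx : x ∈ c then c.next x hx else x
  have hσ : ∀ u (hu : u ∈ c), σ u = c.next u hu := fun u hu => dif_pos hu
  have hinj : Set.InjOn σ U := fun u hu u' hu' he => by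
    obtain ⟨huc, -⟩ := hU u hu
    obtain ⟨hu'c, -⟩ := hU u' hu'
    rw [← c.prev_next hc.nodup u huc, ← c.prev_next hc.nodup u' hu'c]
    simp only [← hσ u huc, ← hσ u' hu'c, he]
  have hvσ : v ∉ U.image σ := by
    simp only [Finset.mem_image, not_exists, not_and]
    intro u hu he
    exact hvc (he ▸ hσ u (hU u hu).1 ▸ c.next_mem _ _)
  have hvσu : ∀ u ∈ U, ¬G.Adj v (σ u) := fun u hu hadj => by
    obtain ⟨huc, h, hh, huh⟩ := hU u hu
    obtain ⟨q, hq⟩ := hH h hh v hv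
    exact hc.not_adj_next_of_walk huc q hq huh (hσ u huc ▸ hadj)
  refine ⟨insert v (U.image σ), by
    rw [Finset.card_insert_of_notMem hvσ, Finset.card_image_of_injOn hinj], ?_⟩
  rintro a ha b hb hab hadj
  simp only [Finset.coe_insert, Finset.coe_image, Set.mem_insert_iff, Set.mem_image,
    Finset.mem_coe] at ha hb
  rcases ha with rfl | ⟨u, hu, rfl⟩ <;> rcases hb with rfl | ⟨u', hu', rfl⟩
  · exact hab rfl
  · exact hvσu u' hu' hadj
  · exact hvσu u hu hadj.symm
  · obtain ⟨huc, h, hh, huh⟩ := hU u hu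
    obtain ⟨hu'c, h', hh', hu'h'⟩ := hU u' hu'
    obtain ⟨q, hq⟩ := hH h hh h' hh'
    refine hc.not_adj_next_next_of_walk huc hu'c (fun he => hab (he ▸ rfl)) q hq huh hu'h' ?_
    rwa [← hσ u huc, ← hσ u' hu'c]

end LongestCycle

section KConnected

variable [Fintype V] {k : ℕ}

theorem IsKConnected.exists_walk_avoiding (hG : G.IsKConnected k) {S : Finset V}
    (hS : S.card < k) {a b : V} (ha : a ∉ S) (hb : b ∉ S) :
    ∃ p : G.Walk a b, ∀ x ∈ p.support, x ∉ S := by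
  obtain ⟨p⟩ := (hG.2 S hS).preconnected ⟨a, ha⟩ ⟨b, hb⟩
  let q : G.Walk a b := p.map (Embedding.induce _).toHom
  have hq : q.support = p.support.map Subtype.val := Walk.support_map _ _
  refine ⟨q, fun x hx => ?_⟩
  obtain ⟨x, -, rfl⟩ := List.mem_map.1 (hq ▸ hx)
  exact x.2

theorem IsKConnected.le_card_of_separates (hG : G.IsKConnected k) {S : Finset V} {H : Set V}
    {a b : V} (ha : a ∈ H) (hb : b ∉ H) (haS : a ∉ S) (hbS : b ∉ S)
    (hsep : ∀ x ∈ H, ∀ y ∉ H, G.Adj x y → y ∈ S) : k ≤ S.card := by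
  by_contra! hS
  obtain ⟨p, hp⟩ := hG.exists_walk_avoiding hS haS hbS
  obtain ⟨d, hd, hd₁, hd₂⟩ := p.exists_boundary_dart H ha hb
  exact hp _ (p.dart_snd_mem_support_of_mem_darts hd) (hsep _ hd₁ _ hd₂ d.adj)

theorem IsKConnected.le_degree [DecidableRel G.Adj] (hG : G.IsKConnected k) (v : V) :
    k ≤ G.degree v := by
  classical
  rw [← card_neighborFinset_eq_degree]
  by_cases h : Finset.univ.erase v ⊆ G.neighborFinset v
  · have := Finset.card_le_card h
    rw [Finset.card_erase_of_mem (Finset.mem_univ v), Finset.card_univ] at this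
    have := hG.1
    omega
  · obtain ⟨w, hw, hwN⟩ := Finset.not_subset.1 h
    exact hG.le_card_of_separates (H := {v}) rfl (Finset.ne_of_mem_erase hw) (by simp) hwN
      (by rintro x rfl y - hxy; simpa using hxy)

theorem IsKConnected.connected (hG : G.IsKConnected k) (hk : 0 < k) : G.Connected := by
  have : Nonempty V := Fintype.card_pos_iff.1 (by have := hG.1; omega)
  refine ⟨fun a b => ?_⟩
  obtain ⟨p, -⟩ :=
    hG.exists_walk_avoiding (S := ∅) (by simpa) (Finset.notMem_empty a) (Finset.notMem_empty b)
  exact p.reachable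

theorem IsKConnected.not_isAcyclic (hG : G.IsKConnected k) (hk : 2 ≤ k) : ¬G.IsAcyclic := by
  classical
  intro hac
  have : Nontrivial V := Fintype.one_lt_card_iff_nontrivial.1 (by have := hG.1; omega)
  obtain ⟨v, hv⟩ :=
    IsTree.exists_vert_degree_one_of_nontrivial ⟨hG.connected (by omega), hac⟩
  have := hG.le_degree v
  omega

end KConnected

theorem IsKConnected.exists_isIndepSet_of_not_isHamiltonian [Fintype V] [DecidableEq V]
    {k : ℕ} (hG : G.IsKConnected k) (hk : 2 ≤ k) (hH : ¬G.IsHamiltonian) :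
    ∃ s : Finset V, k + 1 ≤ s.card ∧ G.IsIndepSet s := by
  classical
  obtain ⟨c, hc⟩ := exists_isLongestCycleList (hG.not_isAcyclic hk)
  obtain ⟨v, hv⟩ : ∃ v, v ∉ c := by
    by_contra! h
    exact hH (hc.toIsCycleList.isHamiltonian h)
  set H : Set V := {w | ∃ p : G.Walk v w, ∀ x ∈ p.support, x ∉ c}
  have hvH : v ∈ H := ⟨.nil, by simpa⟩
  have hHc : ∀ w ∈ H, w ∉ c := fun w ⟨p, hp⟩ => hp w p.end_mem_support
  have hHwalk : ∀ h ∈ H, ∀ h' ∈ H, ∃ q : G.Walk h h', ∀ x ∈ q.support, x ∉ c := by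
    rintro h ⟨p, hp⟩ h' ⟨p', hp'⟩
    refine ⟨p.reverse.append p', fun x hx => ?_⟩
    rw [Walk.mem_support_append_iff, Walk.support_reverse, List.mem_reverse] at hx
    exact hx.elim (hp x) (hp' x)
  have hHout : ∀ x ∈ H, ∀ y ∉ H, G.Adj x y → y ∈ c := by
    rintro x ⟨p, hp⟩ y hy hxy
    by_contra hyc
    refine hy ⟨p.concat hxy, fun z hz => ?_⟩
    rw [Walk.support_concat, List.mem_append, List.mem_singleton] at hz
    exact hz.elim (hp z) (· ▸ hyc)
  set U := c.toFinset.filter fun u => ∃ h ∈ H, G.Adj u h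
  obtain ⟨w, hwc, hw⟩ := hc.exists_mem_forall_not_adj hHwalk
  have hUk : k ≤ U.card := by
    refine hG.le_card_of_separates hvH (fun h => hHc w h hwc) (by simp [U, hv])
      (by simpa [U] using fun _ => hw) fun x hx y hy hxy => ?_
    simpa [U] using ⟨hHout x hx y hy hxy, x, hx, hxy.symm⟩
  obtain ⟨s, hs, hsind⟩ :=
    hc.exists_isIndepSet_card_add_one_le hvH hv hHwalk (U := U) (by simp [U])
  exact ⟨s, by omega, hsind⟩

theorem indepNum'_eq_indepNum : G.indepNum' = G.indepNum := by
  simp only [indepNum', indepNum]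
  congr
  ext n
  exact ⟨fun ⟨s, hs, hind⟩ => ⟨s, hind, hs⟩, fun ⟨s, hind, hs⟩ => ⟨s, hs, hind⟩⟩

theorem IsIndepSet.colorable_card_sub_card_add_one [Fintype V] {s : Finset V}
    (hs : G.IsIndepSet s) : G.Colorable (Fintype.card V - s.card + 1) := by
  classical
  let C : G.Coloring (Option {x // x ∉ s}) :=
    Coloring.mk (fun x => if hx : x ∈ s then none else some ⟨x, hx⟩) fun {a b} hab => by
      by_cases ha : a ∈ s <;> by_cases hb : b ∈ s <;>
        simp only [ha, hb, ↓reduceDIte, ne_eq, reduceCtorEq, not_true_eq_false,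
          not_false_eq_true, Option.some.injEq, Subtype.mk.injEq]
      · exact hs ha hb hab.ne hab
      · exact hab.ne
  simpa only [Fintype.card_option, Fintype.card_subtype_compl, Fintype.card_coe] using
    C.colorable

theorem IsIndepSet.card_add_degree_le [Fintype V] [DecidableRel G.Adj] {s : Finset V}
    (hs : G.IsIndepSet s) {v : V} (hv : v ∈ s) : s.card + G.degree v ≤ Fintype.card V := by
  classical
  have hdisj : Disjoint s (G.neighborFinset v) := Finset.disjoint_left.2 fun x hx hxv =>
    hs hv hx (G.ne_of_adj ((G.mem_neighborFinset v x).1 hxv)) ((G.mem_neighborFinset v x).1 hxv)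
  rw [← card_neighborFinset_eq_degree, ← Finset.card_union_of_disjoint hdisj]
  exact Finset.card_le_univ _

end SimpleGraph

open SimpleGraph in
theorem stmt16 {V : Type*} [Fintype V] [DecidableEq V] (G : SimpleGraph V) (k : ℕ)
    (hk : 2 ≤ k) (hconn : G.IsKConnected k)
    (hchi : ((Fintype.card V - k : ℕ) : ℕ∞) ≤ G.chromaticNumber)
    (hham : ¬ G.IsHamiltonian) :
    2 * k + 1 ≤ Fintype.card V ∧
      G.chromaticNumber = ((Fintype.card V - k : ℕ) : ℕ∞) ∧
      G.indepNum' = k + 1 := by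
  classical
  obtain ⟨s, hs, hsind⟩ := hconn.exists_isIndepSet_of_not_isHamiltonian hk hham
  have hle : ∀ t : Finset V, G.IsIndepSet t → t.card ≤ k + 1 := fun t ht => by
    have := Nat.cast_le.1 (hchi.trans ht.colorable_card_sub_card_add_one.chromaticNumber_le)
    have := t.card_le_univ
    have := hconn.1
    omega
  have hsk : s.card = k + 1 := le_antisymm (hle s hsind) hs
  refine ⟨?_, ?_, ?_⟩
  · obtain ⟨v, hv⟩ := Finset.card_pos.1 (by omega : 0 < s.card)
    have := hsind.card_add_degree_le hv
    have := hconn.le_degree v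
    omega
  · refine le_antisymm ?_ hchi
    have := hsind.colorable_card_sub_card_add_one.chromaticNumber_le
    rwa [hsk, show Fintype.card V - (k + 1) + 1 = Fintype.card V - k by have := hconn.1; omega]
      at this
  · obtain ⟨t, ht⟩ := G.exists_isNIndepSet_indepNum
    rw [indepNum'_eq_indepNum]
    exact le_antisymm (ht.card_eq ▸ hle t ht.isIndepSet) (hsk ▸ hsind.card_le_indepNum)
end
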